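/- Let p ≥ 1 be an integer, H > 0 and β ∈ [0, 1/p]. Let x_k, υ_k, x_{k+1} ∈ E, set u_k = υ_k − x_k, and let ḡ be a subgradient of ψ at x_{k+1} with (x_{k+1}, ḡ) ∈ A(υ_k, β) and ⟨∇f(x_{k+1}) + ḡ, u_k⟩ ≤ 0. Define 𝓛_k(x) = f(x_{k+1}) + ⟨∇f(x_{k+1}), x − x_{k+1}⟩ + ψ(x). Then F(x_k) ≥ 𝓛_k(x_k) ≥ F(x_{k+1}) + ((1−β)/H)^{1/p} ‖∇f(x_{k+1}) + ḡ‖^{(p+1)/p}. -/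

import Mathlib

open scoped RealInnerProductSpace

variable {E : Type*} [NormedAddCommGroup E] [InnerProductSpace ℝ E] [FiniteDimensional ℝ E]

/-- `g` is a subgradient of `ψ` at `T`. -/
def IsSubgrad (ψ : E → ℝ) (T g : E) : Prop := ∀ y, ψ T + ⟪g, y - T⟫ ≤ ψ y

/-- `(T, g)` is an acceptable solution of the `p`-th order proximal-point problem at `xbar`,
i.e. `(T, g) ∈ A(xbar, β)`. -/
def InA (f' : E → E) (ψ : E → ℝ) (p : ℕ) (H β : ℝ) (xbar T g : E) : Prop :=
  IsSubgrad ψ T g ∧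
    ‖f' T + g + (H * ‖T - xbar‖ ^ (p - 1)) • (T - xbar)‖ ≤ β * ‖f' T + g‖

/-
Write `s = ∇f(xₖ₊₁) + ḡ` and `r = ‖xₖ₊₁ - υₖ‖`. The gradient inequality for `f` and the
subgradient inequality for `ψ` give `F(xₖ) ≥ 𝓛ₖ(xₖ)` and `𝓛ₖ(xₖ) - F(xₖ₊₁) ≥ ⟪s, xₖ - xₖ₊₁⟫`,
which by the condition on `uₖ` is at least `⟪s, υₖ - xₖ₊₁⟫`. Squaring the acceptance condition
gives `2 H r^(p-1) ⟪s, υₖ - xₖ₊₁⟫ ≥ (1 - β²) ‖s‖² + H² r^(2p)`, and the triangle inequality gives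
`r ≥ ρ := ((1 - β) ‖s‖ / H)^(1/p)`. For `β ≤ 1/p` the resulting lower bound on
`⟪s, υₖ - xₖ₊₁⟫` is increasing in `r ≥ ρ`, where it equals `‖s‖ ρ`; in homogeneous form this is
the weighted AM-GM inequality `2p ρ^(p+1) r^(p-1) ≤ (p+1) ρ^(2p) + (p-1) r^(2p)`.
-/

theorem ConvexOn.add_fderiv_sub_le {V : Type*} [NormedAddCommGroup V] [NormedSpace ℝ V]
    {s : Set V} {f : V → ℝ} {f' : V →L[ℝ] ℝ} {x y : V} (hf : ConvexOn ℝ s f)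
    (hx : x ∈ s) (hy : y ∈ s) (hf' : HasFDerivAt f f' x) : f x + f' (y - x) ≤ f y := by
  set ℓ : ℝ →ᵃ[ℝ] V := AffineMap.lineMap x y
  have hline : ConvexOn ℝ (ℓ ⁻¹' s) (f ∘ ℓ) := hf.comp_affineMap ℓ
  have hderiv : HasDerivAt (f ∘ ℓ) (f' (y - x)) 0 :=
    HasFDerivAt.comp_hasDerivAt _ (by simpa [ℓ] using hf') AffineMap.hasDerivAt_lineMap
  have hslope := hline.le_slope_of_hasDerivAt (by simpa [ℓ] using hx) (by simpa [ℓ] using hy)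
    zero_lt_one hderiv
  simp only [slope_def_field, ℓ, Function.comp_apply, AffineMap.lineMap_apply_zero,
    AffineMap.lineMap_apply_one, sub_zero, div_one] at hslope
  linarith

theorem ConvexOn.add_inner_sub_le_of_hasGradientAt {V : Type*} [NormedAddCommGroup V]
    [InnerProductSpace ℝ V] [CompleteSpace V] {s : Set V} {f : V → ℝ} {g x y : V}
    (hf : ConvexOn ℝ s f) (hx : x ∈ s) (hy : y ∈ s) (hg : HasGradientAt f g x) :
    f x + ⟪g, y - x⟫ ≤ f y := by
  simpa using hf.add_fderiv_sub_le hx hy hg.hasFDerivAt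

theorem pow_mul_pow_le_add {a b : ℝ} (ha : 0 ≤ a) (hb : 0 ≤ b) (m n : ℕ) :
    ((m + n : ℕ) : ℝ) * (a ^ m * b ^ n) ≤ m * a ^ (m + n) + n * b ^ (m + n) := by
  rcases Nat.eq_zero_or_pos (m + n) with h | h
  · obtain ⟨rfl, rfl⟩ : m = 0 ∧ n = 0 := by omega
    simp
  set k : ℝ := ((m + n : ℕ) : ℝ)
  have hk : 0 < k := by positivity
  have hpow (c : ℝ) (hc : 0 ≤ c) (j : ℕ) : (c ^ (m + n)) ^ ((j : ℝ) / k) = c ^ j := by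
    rw [← Real.rpow_natCast c (m + n), ← Real.rpow_mul hc, mul_div_cancel₀ _ hk.ne',
      Real.rpow_natCast]
  have hamgm := Real.geom_mean_le_arith_mean2_weighted (w₁ := m / k) (w₂ := n / k)
    (by positivity) (by positivity) (pow_nonneg ha (m + n)) (pow_nonneg hb (m + n))
    (by rw [← add_div, div_eq_one_iff_eq hk.ne']; push_cast [k]; rfl)
  rw [hpow a ha, hpow b hb] at hamgm
  calc k * (a ^ m * b ^ n) ≤ k * (m / k * a ^ (m + n) + n / k * b ^ (m + n)) := by gcongr
    _ = m * a ^ (m + n) + n * b ^ (m + n) := by field_simp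

theorem two_mul_pow_succ_mul_pow_pred_le {p : ℕ} (hp : 1 ≤ p) {β ρ t : ℝ} (hβ : β ≤ 1 / p)
    (hρ : 0 ≤ ρ) (hρt : ρ ≤ t) :
    2 * (ρ ^ (p + 1) * t ^ (p - 1)) ≤ (1 + β) * ρ ^ (2 * p) + (1 - β) * t ^ (2 * p) := by
  obtain ⟨q, rfl⟩ : ∃ q, p = q + 1 := ⟨p - 1, by omega⟩
  have hq : (0 : ℝ) < q + 1 := by positivity
  have hamgm := pow_mul_pow_le_add hρ (hρ.trans hρt) (q + 2) q
  have hmono : ρ ^ (2 * (q + 1)) ≤ t ^ (2 * (q + 1)) := pow_le_pow_left₀ hρ hρt _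
  have hpβ : (q + 1 : ℝ) * β ≤ 1 := by
    push_cast at hβ
    rwa [le_div_iff₀' hq] at hβ
  have hslack := mul_nonneg (sub_nonneg.2 hpβ) (sub_nonneg.2 hmono)
  rw [show q + 2 + q = 2 * (q + 1) by ring] at hamgm
  push_cast at hamgm
  rw [Nat.add_sub_cancel]
  refine le_of_mul_le_mul_left ?_ hq
  linear_combination hamgm + hslack

theorem two_mul_mul_le_of_mul_pow_eq {p : ℕ} (hp : 1 ≤ p) {H β a ρ t : ℝ} (hH : 0 ≤ H)
    (hβ : β ≤ 1 / p) (ha : 0 ≤ a) (hρ : 0 ≤ ρ) (hρt : ρ ≤ t) (hHρ : H * ρ ^ p = (1 - β) * a) :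
    2 * (H * t ^ (p - 1)) * (a * ρ) ≤ (1 - β ^ 2) * a ^ 2 + (H * t ^ p) ^ 2 := by
  rcases hρ.eq_or_lt with rfl | hρ
  · rw [zero_pow (by omega), mul_zero, eq_comm] at hHρ
    linear_combination -(1 + β) * a * hHρ + sq_nonneg (H * t ^ p)
  refine le_of_mul_le_mul_left ?_ (pow_pos hρ p)
  linear_combination mul_le_mul_of_nonneg_left
      (two_mul_pow_succ_mul_pow_pred_le hp hβ hρ.le hρt) (mul_nonneg hH ha)
    + ((1 + β) * a * ρ ^ p - H * t ^ (2 * p)) * hHρ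

theorem le_inner_of_norm_add_smul_le {V : Type*} [NormedAddCommGroup V] [InnerProductSpace ℝ V]
    {p : ℕ} (hp : 1 ≤ p) {H β : ℝ} (hH : 0 < H) (hβ : β ≤ 1 / p) {s x T : V}
    (h : ‖s + (H * ‖T - x‖ ^ (p - 1)) • (T - x)‖ ≤ β * ‖s‖) :
    ((1 - β) / H) ^ ((1 : ℝ) / p) * ‖s‖ ^ (((p : ℝ) + 1) / p) ≤ ⟪s, x - T⟫ := by
  set d := T - x
  set c := H * ‖d‖ ^ (p - 1)
  have hβ1 : 0 ≤ 1 - β :=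
    sub_nonneg.2 (hβ.trans (div_le_one_of_le₀ (by exact_mod_cast hp) (by positivity)))
  have hc : 0 ≤ c := by positivity
  have hcd : c * ‖d‖ = H * ‖d‖ ^ p := by
    rw [mul_assoc, ← pow_succ, Nat.sub_add_cancel hp]
  set ρ := ((1 - β) * ‖s‖ / H) ^ ((1 : ℝ) / p) with hρdef
  have hρ : 0 ≤ ρ := by positivity
  have hlhs : ((1 - β) / H) ^ ((1 : ℝ) / p) * ‖s‖ ^ (((p : ℝ) + 1) / p) = ‖s‖ * ρ := by
    rw [hρdef, mul_div_right_comm, Real.mul_rpow (div_nonneg hβ1 hH.le) (norm_nonneg s),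
      add_div, div_self (by positivity), Real.rpow_add' (norm_nonneg s) (by positivity),
      Real.rpow_one]
    ring
  have hHρ : H * ρ ^ p = (1 - β) * ‖s‖ := by
    rw [hρdef, one_div, Real.rpow_inv_natCast_pow (by positivity) (by omega)]
    field_simp
  have hlen : (1 - β) * ‖s‖ ≤ H * ‖d‖ ^ p := by
    have := norm_sub_le (s + c • d) (c • d)
    rw [add_sub_cancel_right, norm_smul, Real.norm_of_nonneg hc, hcd] at this
    linarith
  have hρd : ρ ≤ ‖d‖ := by
    refine (pow_le_pow_iff_left₀ (n := p) hρ (norm_nonneg d) (by omega)).1 ?_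
    exact le_of_mul_le_mul_left (hHρ ▸ hlen) hH
  have hsq : (1 - β ^ 2) * ‖s‖ ^ 2 + (H * ‖d‖ ^ p) ^ 2 ≤ 2 * c * ⟪s, x - T⟫ := by
    have h2 := pow_le_pow_left₀ (norm_nonneg _) h 2
    rw [norm_add_sq_real, inner_smul_right, norm_smul, Real.norm_of_nonneg hc, hcd] at h2
    rw [← neg_sub T x, inner_neg_right]
    linarith
  rw [hlhs]
  rcases (norm_nonneg d).eq_or_lt with hd | hd
  · rw [le_antisymm (hd ▸ hρd) hρ, mul_zero, ← neg_sub T x, inner_neg_right,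
      show T - x = 0 from norm_eq_zero.1 hd.symm, inner_zero_right, neg_zero]
  · have hbound := two_mul_mul_le_of_mul_pow_eq hp hH.le hβ (norm_nonneg s) hρ hρd hHρ
    exact le_of_mul_le_mul_left (hbound.trans hsq) (by positivity)

theorem stmt_10_general (f ψ : E → ℝ) (f' : E → E)
    (hf : ConvexOn ℝ Set.univ f)
    (hf' : ∀ x, HasGradientAt f (f' x) x)
    (p : ℕ) (hp : 1 ≤ p) (H β : ℝ) (hH : 0 < H)
    (hβ : β ∈ Set.Icc (0 : ℝ) (1 / (p : ℝ)))
    (xk vk xk1 gbar : E) (hA : InA f' ψ p H β vk xk1 gbar)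
    (hinner : ⟪f' xk1 + gbar, vk - xk⟫ ≤ 0) :
    f xk + ψ xk ≥ f xk1 + ⟪f' xk1, xk - xk1⟫ + ψ xk ∧
      f xk1 + ⟪f' xk1, xk - xk1⟫ + ψ xk ≥
        f xk1 + ψ xk1 +
          ((1 - β) / H) ^ ((1 : ℝ) / p) * ‖f' xk1 + gbar‖ ^ (((p : ℝ) + 1) / p) := by
  obtain ⟨hsub, hacc⟩ := hA
  have hf_lin : f xk1 + ⟪f' xk1, xk - xk1⟫ ≤ f xk :=
    hf.add_inner_sub_le_of_hasGradientAt (Set.mem_univ _) (Set.mem_univ _) (hf' xk1)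
  have hψ_lin : ψ xk1 + ⟪gbar, xk - xk1⟫ ≤ ψ xk := hsub xk
  have hprox := le_inner_of_norm_add_smul_le hp hH hβ.2 hacc
  have hsplit : ⟪f' xk1 + gbar, xk - xk1⟫ =
      ⟪f' xk1 + gbar, vk - xk1⟫ - ⟪f' xk1 + gbar, vk - xk⟫ := by
    rw [← inner_sub_right, sub_sub_sub_cancel_left]
  rw [inner_add_left] at hsplit
  constructor <;> linarith

theorem stmt_10 (f ψ : E → ℝ) (f' : E → E)
    (hf : ConvexOn ℝ Set.univ f) (hψ : ConvexOn ℝ Set.univ ψ)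
    (hf' : ∀ x, HasGradientAt f (f' x) x)
    (p : ℕ) (hp : 1 ≤ p) (H β : ℝ) (hH : 0 < H)
    (hβ : β ∈ Set.Icc (0 : ℝ) (1 / (p : ℝ)))
    (xk vk xk1 gbar : E) (hA : InA f' ψ p H β vk xk1 gbar)
    (hinner : ⟪f' xk1 + gbar, vk - xk⟫ ≤ 0) :
    f xk + ψ xk ≥ f xk1 + ⟪f' xk1, xk - xk1⟫ + ψ xk ∧
      f xk1 + ⟪f' xk1, xk - xk1⟫ + ψ xk ≥
        f xk1 + ψ xk1 +
          ((1 - β) / H) ^ ((1 : ℝ) / p) * ‖f' xk1 + gbar‖ ^ (((p : ℝ) + 1) / p) :=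
  stmt_10_general f ψ f' hf hf' p hp H β hH hβ xk vk xk1 gbar hA hinner
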